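/- arXiv:2205.02610 — 3 statements merged into one kernel-verified Lean document; each statement's English description precedes it below -/
import Mathlib

section
/- For every l ≥ 2, the number of primes in the interval [2^(l-1), 2^l) is at least 2^(l-1)/(3l), i.e., the fraction of integers in [2^(l-1), 2^l) that are prime is at least 1/(3l). -/
/-!
Erdős' proof of Bertrand's postulate, keeping track of the primes in `(n, 2n]` instead of
assuming there are none: `4 ^ n < n * C(2n, n)`, and the prime factorization of `C(2n, n)`
bounds it by `(2n) ^ √(2n) * 4 ^ (2n/3) * (2n) ^ K` with `K` the number of primes in
`(n, 2n]`. For `n = 2 ^ (l - 1)` every factor is a power of two, and comparing exponents gives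
`l * K ≳ 2 ^ l / 3 - l * 2 ^ (l / 2)`, which exceeds `2 ^ (l - 1) / 3` once `l ≥ 14`.
The cases `l < 14` are a finite computation by trial division.
-/

open Finset Nat

theorem prod_range_pow_factorization_centralBinom_le (n : ℕ) :
    ∏ p ∈ range (2 * n / 3 + 1), p ^ (centralBinom n).factorization p ≤
      (2 * n) ^ sqrt (2 * n) * 4 ^ (2 * n / 3) := by
  rcases Nat.eq_zero_or_pos n with rfl | hn
  · simp
  set f : ℕ → ℕ := fun p => p ^ (centralBinom n).factorization p
  set S := {p ∈ range (2 * n / 3 + 1) | p.Prime}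
  have hS : ∏ p ∈ S, f p = ∏ p ∈ range (2 * n / 3 + 1), f p :=
    prod_filter_of_ne fun p _ h => by
      contrapose h
      simp [f, factorization_eq_zero_of_not_prime _ h]
  rw [← hS, ← prod_filter_mul_prod_filter_not S (· ≤ sqrt (2 * n))]
  gcongr
  · calc ∏ p ∈ S with p ≤ sqrt (2 * n), f p
          ≤ (2 * n) ^ #{p ∈ S | p ≤ sqrt (2 * n)} :=
            prod_le_pow_card _ _ _ fun p _ => pow_factorization_choose_le (by omega)
      _ ≤ (2 * n) ^ sqrt (2 * n) := by
        refine pow_right_mono₀ (by omega) ?_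
        calc #{p ∈ S | p ≤ sqrt (2 * n)} ≤ #(Icc 1 (sqrt (2 * n))) := by
              refine card_le_card fun p hp => ?_
              simp only [S, mem_filter, mem_range] at hp
              exact mem_Icc.2 ⟨hp.1.2.one_lt.le, hp.2⟩
          _ = sqrt (2 * n) := by simp
  · calc ∏ p ∈ S with ¬p ≤ sqrt (2 * n), f p ≤ ∏ p ∈ S with ¬p ≤ sqrt (2 * n), p :=
          prod_le_prod' fun p hp => by
            simp only [S, mem_filter, mem_range, not_le] at hp
            calc f p ≤ p ^ 1 := pow_right_mono₀ hp.1.2.one_lt.le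
                  (factorization_choose_le_one (sqrt_lt'.1 hp.2))
              _ = p := pow_one p
      _ ≤ primorial (2 * n / 3) :=
          prod_le_prod_of_subset_of_one_le' (filter_subset _ _)
            fun p hp _ => (mem_filter.1 hp).2.one_lt.le
      _ ≤ 4 ^ (2 * n / 3) := primorial_le_four_pow _

theorem prod_filter_pow_factorization_centralBinom_le {n : ℕ} (hn : 2 < n) :
    ∏ p ∈ range (2 * n + 1) with ¬p ≤ 2 * n / 3, p ^ (centralBinom n).factorization p ≤
      (2 * n) ^ #{p ∈ Ioc n (2 * n) | p.Prime} := by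
  rw [← prod_subset (s₁ := {p ∈ Ioc n (2 * n) | p.Prime})]
  · exact prod_le_pow_card _ _ _ fun p _ => pow_factorization_choose_le (by omega)
  · intro p hp
    simp only [mem_filter, mem_Ioc, mem_range] at hp ⊢
    omega
  · intro p hp hp'
    simp only [mem_filter, mem_Ioc, mem_range, not_and, not_le] at hp hp'
    by_cases hpr : p.Prime
    · rw [factorization_centralBinom_of_two_mul_self_lt_three_mul hn _ (by omega), pow_zero]
      by_contra! h
      exact hp' ⟨h, by omega⟩ hpr
    · rw [factorization_eq_zero_of_not_prime _ hpr, pow_zero]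

theorem centralBinom_le_mul_pow_card_primes {n : ℕ} (hn : 2 < n) :
    centralBinom n ≤ (2 * n) ^ sqrt (2 * n) * 4 ^ (2 * n / 3) *
      (2 * n) ^ #{p ∈ Ioc n (2 * n) | p.Prime} := by
  have hsmall : {p ∈ range (2 * n + 1) | p ≤ 2 * n / 3} = range (2 * n / 3 + 1) := by
    ext p
    simp only [mem_filter, mem_range]
    omega
  rw [← prod_pow_factorization_centralBinom, ← prod_filter_mul_prod_filter_not _ (· ≤ 2 * n / 3),
    hsmall]
  exact mul_le_mul' (prod_range_pow_factorization_centralBinom_le n)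
    (prod_filter_pow_factorization_centralBinom_le hn)

theorem card_primes_Ioc_le_card_primes_Ico {n : ℕ} (hn : 1 < n) :
    #{p ∈ Ioc n (2 * n) | p.Prime} ≤ #{p ∈ Ico n (2 * n) | p.Prime} := by
  refine card_le_card fun p hp => ?_
  simp only [mem_filter, mem_Ioc, mem_Ico] at hp ⊢
  refine ⟨⟨hp.1.1.le, lt_of_le_of_ne hp.1.2 ?_⟩, hp.2⟩
  rintro rfl
  exact not_prime_mul (by norm_num) (by omega) hp.2

theorem sqrt_two_pow_le (l : ℕ) : sqrt (2 ^ l) ≤ 2 ^ ((l + 1) / 2) :=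
  calc sqrt (2 ^ l) ≤ sqrt ((2 ^ ((l + 1) / 2)) ^ 2) := by
        rw [← pow_mul]
        exact sqrt_le_sqrt (Nat.pow_le_pow_right two_pos (by omega))
    _ = 2 ^ ((l + 1) / 2) := sqrt_eq' _

theorem mul_two_pow_add_le_two_pow {m : ℕ} (hm : 13 ≤ m) :
    3 * m + 3 * (m + 1) * 2 ^ ((m + 2) / 2) ≤ 2 ^ m := by
  have linear_le_two_pow (k : ℕ) : 32 * (k + 1) ≤ 2 ^ (k + 5) := by
    have := k.lt_two_pow_self
    rw [pow_add]
    omega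
  obtain ⟨c, d, rfl, hdc, hcd⟩ : ∃ c d, m = c + d ∧ d < c ∧ c ≤ d + 2 :=
    ⟨(m + 2) / 2, m - (m + 2) / 2, by omega, by omega, by omega⟩
  have hpow_c : 3 * (c + d) ≤ 2 ^ c := by
    have := linear_le_two_pow (c - 5)
    rw [show c - 5 + 5 = c by omega] at this
    omega
  have hpow_d : 3 * (c + d + 1) + 1 ≤ 2 ^ d := by
    have := linear_le_two_pow (d - 5)
    rw [show d - 5 + 5 = d by omega] at this
    omega
  rw [show (c + d + 2) / 2 = c by omega, pow_add]
  nlinarith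

/-- Erdős' inequality for `n = 2 ^ m`, read off in the exponents of `2`. -/
theorem two_pow_lt_exponent_of_centralBinom {m : ℕ} (hm : 2 ≤ m) :
    2 ^ (m + 1) < m + (m + 1) * sqrt (2 ^ (m + 1)) + 2 * (2 ^ (m + 1) / 3) +
      (m + 1) * #{p ∈ Ioc (2 ^ m) (2 ^ (m + 1)) | p.Prime} := by
  have hn : 4 ≤ 2 ^ m := by simpa using Nat.pow_le_pow_right two_pos hm
  have h2n : 2 * 2 ^ m = 2 ^ (m + 1) := by ring
  have h4 (k : ℕ) : 4 ^ k = 2 ^ (2 * k) := by rw [pow_mul]; norm_num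
  rw [← Nat.pow_lt_pow_iff_right one_lt_two]
  calc 2 ^ 2 ^ (m + 1) = 4 ^ 2 ^ m := by rw [h4, ← h2n]
    _ < 2 ^ m * centralBinom (2 ^ m) := four_pow_lt_mul_centralBinom _ hn
    _ ≤ 2 ^ m * ((2 * 2 ^ m) ^ sqrt (2 * 2 ^ m) * 4 ^ (2 * 2 ^ m / 3) *
        (2 * 2 ^ m) ^ #{p ∈ Ioc (2 ^ m) (2 * 2 ^ m) | p.Prime}) := by
      gcongr
      exact centralBinom_le_mul_pow_card_primes (by omega)
    _ = 2 ^ (m + (m + 1) * sqrt (2 ^ (m + 1)) + 2 * (2 ^ (m + 1) / 3) +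
        (m + 1) * #{p ∈ Ioc (2 ^ m) (2 ^ (m + 1)) | p.Prime}) := by
      rw [h2n, h4]
      ring

theorem two_pow_le_three_mul_card_primes_of_fourteen_le {l : ℕ} (hl : 14 ≤ l) :
    2 ^ (l - 1) ≤ 3 * l * #{p ∈ Ico (2 ^ (l - 1)) (2 ^ l) | p.Prime} := by
  obtain ⟨m, rfl⟩ : ∃ m, l = m + 1 := ⟨l - 1, by omega⟩
  rw [Nat.add_sub_cancel]
  have h2 : 2 ^ (m + 1) = 2 * 2 ^ m := by ring
  have hexp := two_pow_lt_exponent_of_centralBinom (m := m) (by omega)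
  have hsqrt : (m + 1) * sqrt (2 ^ (m + 1)) ≤ (m + 1) * 2 ^ ((m + 2) / 2) :=
    Nat.mul_le_mul_left _ (sqrt_two_pow_le (m + 1))
  have hcard := Nat.mul_le_mul_left (m + 1)
    (card_primes_Ioc_le_card_primes_Ico (n := 2 ^ m) (Nat.one_lt_two_pow (by omega)))
  have hbound := mul_two_pow_add_le_two_pow (m := m) (by omega)
  rw [h2] at hexp hsqrt ⊢
  rw [mul_assoc] at hbound ⊢
  omega

def passesTrialDivision (B n : ℕ) : Bool :=
  (List.range' 2 (B - 2)).all fun m => n % m != 0 || m == n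

theorem prime_of_passesTrialDivision {B n : ℕ} (hn : 2 ≤ n) (hnB : n < B ^ 2)
    (h : passesTrialDivision B n) : n.Prime := by
  by_contra hp
  have hsq : n.minFac ^ 2 < B ^ 2 := (minFac_sq_le_self (by omega) hp).trans_lt hnB
  have hlt : n.minFac < B := lt_of_pow_lt_pow_left₀ 2 (Nat.zero_le _) hsq
  have h2 : 2 ≤ n.minFac := (minFac_prime (by omega)).two_le
  have hmem : n.minFac ∈ List.range' 2 (B - 2) := List.mem_range'_1.2 ⟨h2, by omega⟩
  have := List.all_eq_true.1 h _ hmem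
  simp only [mod_eq_zero_of_dvd (minFac_dvd n), bne_self_eq_false, beq_iff_eq,
    Bool.false_or] at this
  exact hp (prime_def_minFac.2 ⟨hn, this⟩)

theorem card_filter_passesTrialDivision_le {a b B : ℕ} (ha : 2 ≤ a) (hb : b ≤ B ^ 2) :
    #{n ∈ Ico a b | passesTrialDivision B n} ≤ #{n ∈ Ico a b | n.Prime} := by
  refine card_le_card fun n hn => ?_
  simp only [mem_filter, mem_Ico] at hn ⊢
  exact ⟨hn.1, prime_of_passesTrialDivision (by omega) (by omega) hn.2⟩

theorem two_pow_le_three_mul_card_primes_of_lt_fourteen {l : ℕ} (hl : 2 ≤ l) (hl' : l < 14) :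
    2 ^ (l - 1) ≤ 3 * l * #{p ∈ Ico (2 ^ (l - 1)) (2 ^ l) | p.Prime} := by
  have hB : 2 ^ l ≤ 91 ^ 2 :=
    (Nat.pow_le_pow_right two_pos (by omega : l ≤ 13)).trans (by norm_num)
  refine le_trans ?_ (Nat.mul_le_mul_left _
    (card_filter_passesTrialDivision_le (Nat.le_self_pow (by omega) 2) hB))
  interval_cases l <;> decide +kernel

theorem two_pow_le_three_mul_card_primes {l : ℕ} (hl : 2 ≤ l) :
    2 ^ (l - 1) ≤ 3 * l * #{p ∈ Ico (2 ^ (l - 1)) (2 ^ l) | p.Prime} := by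
  rcases Nat.lt_or_ge l 14 with h | h
  · exact two_pow_le_three_mul_card_primes_of_lt_fourteen hl h
  · exact two_pow_le_three_mul_card_primes_of_fourteen_le h

theorem primes_in_dyadic_interval (l : ℕ) (hl : 2 ≤ l) :
    ((2 : ℚ) ^ (l - 1)) / (3 * l) ≤
      (((Finset.Ico (2 ^ (l - 1)) (2 ^ l)).filter Nat.Prime).card : ℚ) ∧
    (1 : ℚ) / (3 * l) ≤
      (((Finset.Ico (2 ^ (l - 1)) (2 ^ l)).filter Nat.Prime).card : ℚ) / (2 : ℚ) ^ (l - 1) := by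
  have hK : (2 : ℚ) ^ (l - 1) ≤ 3 * l * #{p ∈ Ico (2 ^ (l - 1)) (2 ^ l) | p.Prime} := by
    exact_mod_cast two_pow_le_three_mul_card_primes hl
  have h3l : (0 : ℚ) < 3 * l := by positivity
  constructor
  · rw [div_le_iff₀ h3l]
    linarith
  · rw [div_le_div_iff₀ h3l (by positivity)]
    linarith
end

section
/- In the PASC algorithm on a chain C = (u_0, ..., u_{m-1}) with reference u_r: if in each iteration every amoebot records bit 0 when the reference's signal reaches it on its primary circuit and bit 1 on its secondary circuit, and active amoebots receiving the secondary signal become passive, then after all iterations the bits recorded by amoebot u_i (least significant first) form the two's complement representation of i − r. In particular, consecutive amoebots receive consecutive identifiers: id(u_{i+1}) = id(u_i) + 1, and id(u_r) = 0. -/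
/-!
By induction on `t`, amoebot `u_j` is active in iteration `t` iff `j ≡ r [MOD 2^t]`. Given this,
the active amoebots in `(min r i, max r i]` are the integers `≡ r` mod `2^t` there, and there
are `|⌊(i - r) / 2^t⌋|` of them; so the bit recorded by `u_i` in iteration `t` is the parity
of `⌊(i - r) / 2^t⌋`, i.e. bit `t` of `i - r` in two's complement. The induction step is the same count: `u_j` stays active iff `⌊(j - r) / 2^t⌋` is
even, i.e. iff `j ≡ r [MOD 2^(t+1)]`.
-/

open Finset

theorem Int.sum_odd_ediv_two_pow_add (z : ℤ) (k : ℕ) :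
    ∑ t ∈ Finset.range k, (if Odd (z / 2 ^ t) then (2 : ℤ) ^ t else 0) + 2 ^ k * (z / 2 ^ k) =
      z := by
  induction k with
  | zero => simp
  | succ k ih =>
    have hdigit : z / 2 ^ k = 2 * (z / 2 ^ (k + 1)) + z / 2 ^ k % 2 := by
      rw [pow_succ, ← Int.ediv_ediv_of_nonneg (by positivity)]
      omega
    rw [sum_range_succ]
    by_cases hodd : Odd (z / 2 ^ k)
    · rw [if_pos hodd]
      linear_combination ih - 2 ^ k * hdigit - 2 ^ k * Int.odd_iff.mp hodd
    · rw [if_neg hodd]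
      linear_combination ih - 2 ^ k * hdigit - 2 ^ k * Int.not_odd_iff.mp hodd

theorem Int.sum_odd_ediv_two_pow_modEq (z : ℤ) (k : ℕ) :
    ∑ t ∈ Finset.range k, (if Odd (z / 2 ^ t) then (2 : ℤ) ^ t else 0) ≡ z [ZMOD 2 ^ k] :=
  Int.modEq_of_dvd ⟨z / 2 ^ k, by linarith [z.sum_odd_ediv_two_pow_add k]⟩

theorem Int.modEq_two_mul_iff {d a b : ℤ} (hd : d ≠ 0) :
    a ≡ b [ZMOD 2 * d] ↔ a ≡ b [ZMOD d] ∧ Even ((a - b) / d) := by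
  constructor
  · intro h
    obtain ⟨q, hq⟩ := h.symm.dvd
    refine ⟨h.of_mul_left 2, ?_⟩
    rw [hq, mul_comm 2 d, mul_assoc, Int.mul_ediv_cancel_left _ hd]
    exact even_two_mul q
  · rintro ⟨h, heven⟩
    obtain ⟨q, hq⟩ := h.symm.dvd
    rw [hq, Int.mul_ediv_cancel_left _ hd] at heven
    obtain ⟨s, rfl⟩ := heven
    exact (Int.modEq_of_dvd ⟨s, by rw [hq]; ring⟩).symm

theorem Nat.card_filter_modEq_Ioc_min_max {d : ℕ} (hd : 0 < d) (r i : ℕ) :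
    #{j ∈ Ioc (min r i) (max r i) | j ≡ r [MOD d]} = (((i : ℤ) - r) / d).natAbs := by
  have hcard := Nat.Ioc_filter_modEq_card (min r i) (max r i) hd r
  have hfloor (n : ℕ) : ⌊((n : ℚ) - r) / d⌋ = ((n : ℤ) - r) / d := by
    exact_mod_cast Rat.floor_intCast_div_natCast ((n : ℤ) - r) d
  rcases le_total r i with h | h
  · rw [min_eq_left h, max_eq_right h] at hcard ⊢
    rw [hfloor, hfloor, sub_self, Int.zero_ediv, sub_zero] at hcard
    have : 0 ≤ ((i : ℤ) - r) / d := Int.ediv_nonneg (by omega) (by positivity)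
    omega
  · rw [min_eq_right h, max_eq_left h] at hcard ⊢
    rw [hfloor, hfloor, sub_self, Int.zero_ediv, zero_sub] at hcard
    have : ((i : ℤ) - r) / d ≤ 0 := Int.ediv_nonpos_of_nonpos_of_neg (by omega) (by positivity)
    omega

def twosComplementValue (k : ℕ) (bits : ℕ → Bool) : ℤ :=
  (if bits (k - 1) = true then -(2 : ℤ) ^ (k - 1) else 0) +
    ∑ t ∈ Finset.range (k - 1), (if bits t = true then (2 : ℤ) ^ t else 0)

theorem twosComplementValue_modEq_sum (k : ℕ) (bits : ℕ → Bool) :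
    twosComplementValue k bits ≡ ∑ t ∈ range k, (if bits t = true then (2 : ℤ) ^ t else 0)
      [ZMOD 2 ^ k] := by
  rcases k with _ | k
  · simp [Int.modEq_one]
  · apply Int.modEq_of_dvd
    rw [twosComplementValue, Nat.add_sub_cancel, sum_range_succ]
    cases bits k
    · simp
    · exact ⟨1, by simp only [↓reduceIte]; ring⟩

theorem twosComplementValue_eq_zero {bits : ℕ → Bool} (h : ∀ t, bits t = false) (k : ℕ) :
    twosComplementValue k bits = 0 := by
  simp [twosComplementValue, h]

theorem twosComplementValue_odd_ediv_two_pow_modEq (z : ℤ) (k : ℕ) :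
    twosComplementValue k (fun t => decide (Odd (z / 2 ^ t))) ≡ z [ZMOD 2 ^ k] :=
  (twosComplementValue_modEq_sum k _).trans (by simpa using z.sum_odd_ediv_two_pow_modEq k)

def RecordsActiveParity (m r : ℕ) (active b : ℕ → ℕ → Bool) : Prop :=
  ∀ t i, i < m → (b t i = true ↔ Odd #{j ∈ Ioc (min r i) (max r i) | active t j = true})

def BecomesPassiveOnOne (m r : ℕ) (active b : ℕ → ℕ → Bool) : Prop :=
  ∀ t i, i < m → (active (t + 1) i = true ↔ (active t i = true ∧ (b t i = false ∨ i = r)))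

section PASC

variable {m r : ℕ} {active b : ℕ → ℕ → Bool}

theorem bit_reference_eq_false (hb : RecordsActiveParity m r active b)
    (hr : r < m) (t : ℕ) : b t r = false := by
  simpa using hb t r hr

theorem bit_iff_odd_ediv (hb : RecordsActiveParity m r active b) (hr : r < m)
    {t : ℕ} (hact : ∀ j < m, active t j = true ↔ j ≡ r [MOD 2 ^ t]) {i : ℕ} (hi : i < m) :
    b t i = true ↔ Odd (((i : ℤ) - r) / 2 ^ t) := by
  have hmem : ∀ j ∈ Ioc (min r i) (max r i), active t j = true ↔ j ≡ r [MOD 2 ^ t] :=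
    fun j hj => hact j (by grind)
  rw [hb t i hi, filter_congr hmem, Nat.card_filter_modEq_Ioc_min_max (by positivity),
    Int.natAbs_odd]
  norm_cast

theorem active_iff_modEq (h0 : ∀ i, active 0 i = true) (hb : RecordsActiveParity m r active b)
    (hstep : BecomesPassiveOnOne m r active b) (hr : r < m) (t : ℕ) :
    ∀ j < m, active t j = true ↔ j ≡ r [MOD 2 ^ t] := by
  induction t with
  | zero => simp [h0, Nat.modEq_one]
  | succ t ih =>
    intro j hj
    rw [hstep t j hj, ih j hj, ← Bool.not_eq_true, bit_iff_odd_ediv hb hr ih hj,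
      Int.not_odd_iff_even, ← Int.natCast_modEq_iff, ← Int.natCast_modEq_iff, pow_succ']
    push_cast
    rw [Int.modEq_two_mul_iff (by positivity)]
    refine and_congr_right fun _ => or_iff_left_of_imp ?_
    rintro rfl
    simp

end PASC

theorem pasc_computes_identifiers (m r : ℕ) (hr : r < m)
    (active : ℕ → ℕ → Bool) (b : ℕ → ℕ → Bool)
    -- initially every amoebot is active
    (h0 : ∀ i, active 0 i = true)
    -- in iteration t, amoebot i records bit 1 iff the number of active amoebots
    -- between the reference r (exclusive) and i (inclusive) is odd
    (hb : ∀ t i, i < m → (b t i = true ↔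
      Odd (((Finset.Ioc (min r i) (max r i)).filter (fun j => active t j = true)).card)))
    -- an active amoebot (other than the reference) becomes passive after recording bit 1
    (hstep : ∀ t i, i < m →
      (active (t + 1) i = true ↔ (active t i = true ∧ (b t i = false ∨ i = r)))) :
    ∀ (k : ℕ), k = Nat.clog 2 m →
    ∀ (val : ℕ → ℤ), (val = fun i =>
        (if b (k - 1) i = true then -(2 : ℤ) ^ (k - 1) else 0) +
          ∑ t ∈ Finset.range (k - 1), (if b t i = true then (2 : ℤ) ^ t else 0)) →
      -- the reference receives identifier 0
      val r = 0 ∧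
      -- amoebot i receives the two's complement representation of i - r
      (∀ i < m, val i ≡ (i : ℤ) - (r : ℤ) [ZMOD (2 ^ k : ℤ)]) ∧
      -- consecutive amoebots receive consecutive identifiers
      (∀ i, i + 1 < m → val (i + 1) ≡ val i + 1 [ZMOD (2 ^ k : ℤ)]) := by
  intro k _ val hval
  subst hval
  have hbits (i : ℕ) (hi : i < m) : (b · i) = fun t => decide (Odd (((i : ℤ) - r) / 2 ^ t)) :=
    funext fun t => Bool.eq_iff_iff.mpr <| by
      simpa using bit_iff_odd_ediv hb hr (active_iff_modEq h0 hb hstep hr t) hi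
  have hid (i : ℕ) (hi : i < m) : twosComplementValue k (b · i) ≡ i - r [ZMOD 2 ^ k] := by
    rw [hbits i hi]
    exact twosComplementValue_odd_ediv_two_pow_modEq _ k
  refine ⟨twosComplementValue_eq_zero (bit_reference_eq_false hb hr) k, hid, fun i hi => ?_⟩
  calc twosComplementValue k (b · (i + 1)) ≡ ((i + 1 : ℕ) : ℤ) - r [ZMOD 2 ^ k] := hid _ hi
    _ = (i - r) + 1 := by push_cast; ring
    _ ≡ twosComplementValue k (b · i) + 1 [ZMOD 2 ^ k] := (hid i (by omega)).symm.add_right 1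
end

section
/- Let S be a finite subset of the triangular grid with n elements. The number of boundary nodes of S (nodes adjacent to the complement) on the outer boundary is Ω(√n): if S has n nodes then its outer boundary set contains at least c·√n nodes for some absolute constant c > 0. -/
/-- The infinite triangular grid graph on `ℤ²`: each node has the 6 neighbors obtained by
adding `±(1,0)`, `±(0,1)`, `±(1,-1)`. -/
def triGraph : SimpleGraph (ℤ × ℤ) :=
  SimpleGraph.fromRel (fun u v => v - u = (1, 0) ∨ v - u = (0, 1) ∨ v - u = (1, -1))

/-- The outer boundary set of a finite amoebot structure `S`: the nodes of `S` adjacent to the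
infinite connected component of the complement of `S`. -/
def outerBoundary (S : Finset (ℤ × ℤ)) : Set (ℤ × ℤ) :=
  {u | u ∈ S ∧ ∃ v, v ∉ S ∧ triGraph.Adj u v ∧
    {w | Relation.ReflTransGen
      (fun a b => a ∉ S ∧ b ∉ S ∧ triGraph.Adj a b) v w}.Infinite}

/-! Along any grid direction `d`, the last node of `S` on a line `p + ℤ d` is followed by an
infinite ray of free nodes, so it lies on the outer boundary. Taking `d = (1, 0)` and `d = (0, 1)`,
the outer boundary meets every row and every column that `S` meets; hence `S`, which lies in the
product of its rows and columns, has at most `b²` nodes, where `b` is the size of the outer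
boundary. -/

lemma triGraph_adj_add_left_iff {u v w : ℤ × ℤ} :
    triGraph.Adj (u + v) (u + w) ↔ triGraph.Adj v w := by
  simp [triGraph, SimpleGraph.fromRel_adj, add_sub_add_left_eq_sub]

lemma Finset.exists_last_mem_on_line {M : Type*} [AddCommGroup M] [Module.IsTorsionFree ℤ M]
    (S : Finset M) {p d : M} (hp : p ∈ S) (hd : d ≠ 0) :
    ∃ u ∈ S, (∃ k : ℤ, u = p + k • d) ∧ ∀ j : ℕ, u + (j + 1 : ℤ) • d ∉ S := by
  have hinj : Function.Injective fun k : ℤ => p + k • d :=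
    (add_right_injective p).comp (smul_left_injective ℤ hd)
  set K := S.preimage (fun k : ℤ => p + k • d) hinj.injOn
  have hK : K.Nonempty := ⟨0, by simpa [K] using hp⟩
  refine ⟨p + K.max' hK • d, by simpa [K] using K.max'_mem hK, ⟨_, rfl⟩, fun j hj => ?_⟩
  have : K.max' hK + (j + 1) ∈ K := by simpa [K, add_smul, add_assoc] using hj
  linarith [K.le_max' _ this]

lemma mem_outerBoundary_of_ray {S : Finset (ℤ × ℤ)} {u d : ℤ × ℤ} (hu : u ∈ S)
    (hd : triGraph.Adj 0 d) (hray : ∀ k : ℕ, u + (k + 1 : ℤ) • d ∉ S) :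
    u ∈ outerBoundary S := by
  have hstep (x : ℤ × ℤ) : triGraph.Adj x (x + d) := by
    simpa using (triGraph_adj_add_left_iff (u := x)).mpr hd
  have hinj : Function.Injective fun k : ℕ => u + (k + 1 : ℤ) • d := fun a b hab => by
    exact_mod_cast add_right_cancel (smul_left_injective ℤ hd.ne' (add_left_cancel hab))
  refine ⟨hu, u + d, by simpa using hray 0, hstep u,
    Set.infinite_of_injective_forall_mem hinj fun k => ?_⟩
  induction k with
  | zero => simpa using Relation.ReflTransGen.refl
  | succ k ih =>
    refine ih.tail ⟨hray k, hray (k + 1), ?_⟩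
    have hnext : u + (((k + 1 : ℕ) : ℤ) + 1) • d = u + ((k : ℤ) + 1) • d + d := by
      push_cast; module
    exact hnext ▸ hstep _

lemma card_image_le_ncard_outerBoundary {β : Type*} [DecidableEq β] (S : Finset (ℤ × ℤ))
    {d : ℤ × ℤ} (hd : triGraph.Adj 0 d) (f : ℤ × ℤ → β)
    (hf : ∀ p (k : ℤ), f (p + k • d) = f p) :
    (S.image f).card ≤ (outerBoundary S).ncard := by
  have hfin : (outerBoundary S).Finite := S.finite_toSet.subset fun u hu => hu.1
  have hsub : (S.image f : Set β) ⊆ f '' outerBoundary S := by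
    rw [Finset.coe_image]
    rintro - ⟨p, hp, rfl⟩
    obtain ⟨u, hu, ⟨k, rfl⟩, hray⟩ := S.exists_last_mem_on_line hp hd.ne'
    exact ⟨_, mem_outerBoundary_of_ray hu hd hray, hf p k⟩
  calc (S.image f).card = (S.image f : Set β).ncard := (Set.ncard_coe_finset _).symm
    _ ≤ (f '' outerBoundary S).ncard := Set.ncard_le_ncard hsub (hfin.image f)
    _ ≤ (outerBoundary S).ncard := Set.ncard_image_le hfin

theorem outer_boundary_isoperimetric :
    ∃ c : ℝ, 0 < c ∧ ∀ S : Finset (ℤ × ℤ), S.Nonempty →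
      c * Real.sqrt (S.card : ℝ) ≤ ((outerBoundary S).ncard : ℝ) := by
  refine ⟨1, one_pos, fun S _ => ?_⟩
  have hcols := card_image_le_ncard_outerBoundary S (d := (0, 1))
    (by simp [triGraph, Prod.ext_iff]) Prod.fst (by simp)
  have hrows := card_image_le_ncard_outerBoundary S (d := (1, 0))
    (by simp [triGraph, Prod.ext_iff]) Prod.snd (by simp)
  have hcard : S.card ≤ (outerBoundary S).ncard ^ 2 :=
    calc S.card ≤ (S.image Prod.fst ×ˢ S.image Prod.snd).card :=
          Finset.card_le_card Finset.subset_product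
      _ = (S.image Prod.fst).card * (S.image Prod.snd).card := Finset.card_product _ _
      _ ≤ (outerBoundary S).ncard ^ 2 := by rw [sq]; exact Nat.mul_le_mul hcols hrows
  rw [one_mul, Real.sqrt_le_left (by positivity)]
  exact_mod_cast hcard
end
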